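/- In an (n, ℓ, r, t) secret sharing scheme with uniform secret, for any I ⊆ [n] with #I ≥ r and preprocessing functions E_{I,i} allowing recovery of the secret from (E_{I,i}(x_i))_{i∈I}, the decoding bandwidth satisfies DB(I) = Σ_{i∈I} H(E(x_i)) ≥ ℓ·#I / (#I − t). -/
import Mathlib


open Finset

/-- A probability mass function on a finite sample space. -/
structure FinPMF (Ω : Type*) [Fintype Ω] where
  p : Ω → ℝ
  nonneg : ∀ ω, 0 ≤ p ω
  sum_one : ∑ ω, p ω = 1

/-- Probability of an event. -/
noncomputable def prob {Ω : Type*} [Fintype Ω] (μ : FinPMF Ω) (E : Set Ω) : ℝ :=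
  ∑ ω, E.indicator μ.p ω

/-- Shannon entropy (base `b`) of a random variable `X` on `(Ω, μ)`. -/
noncomputable def entropy {Ω A : Type*} [Fintype Ω] [Fintype A] (b : ℝ) (μ : FinPMF Ω)
    (X : Ω → A) : ℝ :=
  -∑ a, prob μ {ω | X ω = a} * Real.logb b (prob μ {ω | X ω = a})

/-- Conditional entropy `H(X | Y) = H(X, Y) − H(Y)`. -/
noncomputable def condEntropy {Ω A B : Type*} [Fintype Ω] [Fintype A] [Fintype B] (b : ℝ)
    (μ : FinPMF Ω) (X : Ω → A) (Y : Ω → B) : ℝ :=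
  entropy b μ (fun ω => (X ω, Y ω)) - entropy b μ Y

/-- Mutual information `I(X ; Y) = H(X) − H(X | Y)`. -/
noncomputable def mutualInfo {Ω A B : Type*} [Fintype Ω] [Fintype A] [Fintype B] (b : ℝ)
    (μ : FinPMF Ω) (X : Ω → A) (Y : Ω → B) : ℝ :=
  entropy b μ X - condEntropy b μ X Y

namespace SSS
open scoped Classical

variable {Ω : Type*} [Fintype Ω] {b : ℝ}

noncomputable def pr {A : Type*} (μ : FinPMF Ω) (X : Ω → A) (a : A) : ℝ :=
  ∑ ω, if X ω = a then μ.p ω else 0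

lemma prob_eq_pr {A : Type*} (μ : FinPMF Ω) (X : Ω → A) (a : A) :
    prob μ {ω | X ω = a} = pr μ X a := by
  unfold prob pr
  refine Finset.sum_congr rfl fun ω _ => ?_
  by_cases h : X ω = a <;> simp [Set.indicator_apply, h]

lemma pr_nonneg {A : Type*} (μ : FinPMF Ω) (X : Ω → A) (a : A) : 0 ≤ pr μ X a :=
  Finset.sum_nonneg fun ω _ => by by_cases h : X ω = a <;> simp [h, μ.nonneg ω]

lemma sum_pr {A : Type*} [Fintype A] (μ : FinPMF Ω) (X : Ω → A) : ∑ a, pr μ X a = 1 := by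
  unfold pr
  rw [Finset.sum_comm]
  have : ∀ ω : Ω, ∑ a : A, (if X ω = a then μ.p ω else 0) = μ.p ω := by
    intro ω; simp [Finset.sum_ite_eq]
  simp only [this, μ.sum_one]

lemma pr_le_one {A : Type*} [Fintype A] (μ : FinPMF Ω) (X : Ω → A) (a : A) :
    pr μ X a ≤ 1 := by
  rw [← sum_pr μ X]
  exact Finset.single_le_sum (fun a _ => pr_nonneg μ X a) (Finset.mem_univ a)

lemma pr_le_pr {A C : Type*} (μ : FinPMF Ω) (X : Ω → A) (Y : Ω → C) {a : A} {c : C}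
    (h : ∀ ω, X ω = a → Y ω = c) : pr μ X a ≤ pr μ Y c := by
  refine Finset.sum_le_sum fun ω _ => ?_
  by_cases hx : X ω = a
  · rw [if_pos hx, if_pos (h ω hx)]
  · rw [if_neg hx]; by_cases hy : Y ω = c <;> simp [hy, μ.nonneg ω]

lemma sum_pr_fst {A C : Type*} [Fintype A] (μ : FinPMF Ω) (X : Ω → A) (Z : Ω → C) (c : C) :
    ∑ a, pr μ (fun ω => (X ω, Z ω)) (a, c) = pr μ Z c := by
  unfold pr
  rw [Finset.sum_comm]
  refine Finset.sum_congr rfl fun ω _ => ?_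
  by_cases hz : Z ω = c <;> simp [Prod.ext_iff, hz, Finset.sum_ite_eq]

lemma sum_pr_mul {A C : Type*} [Fintype A] [Fintype C] (μ : FinPMF Ω)
    (X : Ω → A) (f : A → C) (g : C → ℝ) :
    ∑ c, pr μ (fun ω => f (X ω)) c * g c = ∑ a, pr μ X a * g (f a) := by
  unfold pr
  simp only [Finset.sum_mul, ite_mul, zero_mul]
  rw [Finset.sum_comm]
  conv_rhs => rw [Finset.sum_comm]
  refine Finset.sum_congr rfl fun ω _ => ?_
  rw [Finset.sum_ite_eq univ (f (X ω)) (fun c => μ.p ω * g c),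
      Finset.sum_ite_eq univ (X ω) (fun a => μ.p ω * g (f a))]
  simp

lemma pr_comp_inj {A C : Type*} (μ : FinPMF Ω) (X : Ω → A) {f : A → C}
    (hf : Function.Injective f) (a : A) :
    pr μ (fun ω => f (X ω)) (f a) = pr μ X a := by
  unfold pr
  refine Finset.sum_congr rfl fun ω _ => by simp [hf.eq_iff]

lemma entropy_pr {A : Type*} [Fintype A] (μ : FinPMF Ω) (X : Ω → A) :
    entropy b μ X = -∑ a, pr μ X a * Real.logb b (pr μ X a) := by
  unfold entropy; simp only [prob_eq_pr]

lemma entropy_nonneg {A : Type*} [Fintype A] (hb : 1 < b) (μ : FinPMF Ω) (X : Ω → A) :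
    0 ≤ entropy b μ X := by
  rw [entropy_pr, neg_nonneg]
  refine Finset.sum_nonpos fun a _ => ?_
  exact mul_nonpos_of_nonneg_of_nonpos (pr_nonneg μ X a)
    (Real.logb_nonpos hb (pr_nonneg μ X a) (pr_le_one μ X a))

lemma entropy_comp_le {A C : Type*} [Fintype A] [Fintype C] (hb : 1 < b) (μ : FinPMF Ω)
    (X : Ω → A) (f : A → C) :
    entropy b μ (fun ω => f (X ω)) ≤ entropy b μ X := by
  rw [entropy_pr, entropy_pr,
    sum_pr_mul μ X f (fun c => Real.logb b (pr μ (fun ω => f (X ω)) c))]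
  apply neg_le_neg
  refine Finset.sum_le_sum fun a _ => ?_
  rcases eq_or_lt_of_le (pr_nonneg μ X a) with h0 | h0
  · simp [← h0]
  · have hle : pr μ X a ≤ pr μ (fun ω => f (X ω)) (f a) :=
      pr_le_pr μ _ _ (fun ω hx => by rw [hx])
    exact mul_le_mul_of_nonneg_left
      ((Real.logb_le_logb hb h0 (lt_of_lt_of_le h0 hle)).mpr hle) h0.le

lemma entropy_comp_inj {A C : Type*} [Fintype A] [Fintype C] (μ : FinPMF Ω)
    (X : Ω → A) {f : A → C} (hf : Function.Injective f) :
    entropy b μ (fun ω => f (X ω)) = entropy b μ X := by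
  rw [entropy_pr, entropy_pr,
    sum_pr_mul μ X f (fun c => Real.logb b (pr μ (fun ω => f (X ω)) c))]
  congr 1
  refine Finset.sum_congr rfl fun a _ => ?_
  rw [pr_comp_inj μ X hf a]

lemma entropy_unique {C : Type*} [Fintype C] [Unique C] (μ : FinPMF Ω) (X : Ω → C) :
    entropy b μ X = 0 := by
  rw [entropy_pr]
  have h1 : pr μ X default = 1 := by
    unfold pr
    rw [← μ.sum_one]
    exact Finset.sum_congr rfl fun ω _ => by rw [if_pos (Unique.eq_default _)]
  rw [Fintype.sum_unique]
  simp [h1]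


lemma gibbs {ι : Type*} [Fintype ι] (hb : 1 < b) (p q : ι → ℝ)
    (hp : ∀ i, 0 ≤ p i) (hq : ∀ i, 0 ≤ q i) (hp1 : ∑ i, p i = 1) (hq1 : ∑ i, q i ≤ 1)
    (hz : ∀ i, q i = 0 → p i = 0) :
    -∑ i, p i * Real.logb b (p i) ≤ -∑ i, p i * Real.logb b (q i) := by
  have hlb : 0 < Real.log b := Real.log_pos hb
  have key : ∀ i, p i * Real.logb b (q i) - p i * Real.logb b (p i)
      ≤ (q i - p i) / Real.log b := by
    intro i
    rcases eq_or_lt_of_le (hp i) with h0 | h0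
    · rw [← h0]
      simp only [zero_mul, sub_zero, sub_self]
      exact div_nonneg (hq i) hlb.le
    · have hq0 : 0 < q i :=
        lt_of_le_of_ne (hq i) (fun h => by have := hz i h.symm; linarith)
      have hlog : Real.log (q i / p i) ≤ q i / p i - 1 :=
        Real.log_le_sub_one_of_pos (div_pos hq0 h0)
      have hmul : p i * Real.log (q i / p i) ≤ q i - p i := by
        calc p i * Real.log (q i / p i) ≤ p i * (q i / p i - 1) :=
              mul_le_mul_of_nonneg_left hlog h0.le
          _ = q i - p i := by field_simp
      rw [Real.log_div hq0.ne' h0.ne'] at hmul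
      unfold Real.logb
      calc p i * (Real.log (q i) / Real.log b) - p i * (Real.log (p i) / Real.log b)
          = (p i * (Real.log (q i) - Real.log (p i))) / Real.log b := by ring
        _ ≤ (q i - p i) / Real.log b := by gcongr
  have h2 : ∑ i, (p i * Real.logb b (q i) - p i * Real.logb b (p i))
      ≤ ∑ i, (q i - p i) / Real.log b :=
    Finset.sum_le_sum fun i _ => key i
  rw [Finset.sum_sub_distrib] at h2
  have h3 : ∑ i, (q i - p i) / Real.log b = (∑ i, q i - 1) / Real.log b := by
    rw [← Finset.sum_div, Finset.sum_sub_distrib, hp1]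
  rw [h3] at h2
  have h4 : (∑ i, q i - 1) / Real.log b ≤ 0 :=
    div_nonpos_of_nonpos_of_nonneg (by linarith) hlb.le
  linarith

lemma entropy_pair_le {A C : Type*} [Fintype A] [Fintype C] (hb : 1 < b) (μ : FinPMF Ω)
    (X : Ω → A) (Y : Ω → C) :
    entropy b μ (fun ω => (X ω, Y ω)) ≤ entropy b μ X + entropy b μ Y := by
  set Z : Ω → A × C := fun ω => (X ω, Y ω) with hZ
  have hzz : ∀ z : A × C, pr μ X z.1 * pr μ Y z.2 = 0 → pr μ Z z = 0 := by
    intro z h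
    rcases mul_eq_zero.mp h with h | h
    · refine le_antisymm ?_ (pr_nonneg μ Z z)
      calc pr μ Z z ≤ pr μ X z.1 := pr_le_pr μ _ _ (fun ω hx => by rw [← hx])
        _ = 0 := h
    · refine le_antisymm ?_ (pr_nonneg μ Z z)
      calc pr μ Z z ≤ pr μ Y z.2 := pr_le_pr μ _ _ (fun ω hx => by rw [← hx])
        _ = 0 := h
  have hG := gibbs hb (pr μ Z) (fun z => pr μ X z.1 * pr μ Y z.2)
    (pr_nonneg μ Z) (fun z => mul_nonneg (pr_nonneg μ X z.1) (pr_nonneg μ Y z.2))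
    (sum_pr μ Z)
    (by rw [Fintype.sum_prod_type, ← Finset.sum_mul_sum, sum_pr, sum_pr, one_mul])
    hzz
  rw [← entropy_pr] at hG
  refine hG.trans (le_of_eq ?_)
  have split : ∀ z : A × C, pr μ Z z * Real.logb b (pr μ X z.1 * pr μ Y z.2)
      = pr μ Z z * Real.logb b (pr μ X z.1) + pr μ Z z * Real.logb b (pr μ Y z.2) := by
    intro z
    rcases eq_or_lt_of_le (pr_nonneg μ Z z) with h0 | h0
    · rw [← h0]; ring
    · have hx : pr μ X z.1 ≠ 0 := by
        intro h; have := hzz z (by rw [h, zero_mul]); linarith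
      have hy : pr μ Y z.2 ≠ 0 := by
        intro h; have := hzz z (by rw [h, mul_zero]); linarith
      rw [Real.logb_mul hx hy]; ring
  rw [Finset.sum_congr rfl (fun z _ => split z), Finset.sum_add_distrib, neg_add]
  congr 1
  · rw [entropy_pr]
    congr 1
    have h1 : ∀ c, pr μ (fun ω => Prod.fst (Z ω)) c = pr μ X c := fun c => rfl
    have := sum_pr_mul μ Z Prod.fst (fun c => Real.logb b (pr μ X c))
    simp only [h1] at this
    rw [← this]
  · rw [entropy_pr]
    congr 1
    have h1 : ∀ c, pr μ (fun ω => Prod.snd (Z ω)) c = pr μ Y c := fun c => rfl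
    have := sum_pr_mul μ Z Prod.snd (fun c => Real.logb b (pr μ Y c))
    simp only [h1] at this
    rw [← this]


lemma entropy_submod {A C D : Type*} [Fintype A] [Fintype C] [Fintype D] (hb : 1 < b)
    (μ : FinPMF Ω) (U : Ω → A) (V : Ω → C) (W : Ω → D) :
    entropy b μ (fun ω => (U ω, V ω, W ω)) + entropy b μ W
      ≤ entropy b μ (fun ω => (U ω, W ω)) + entropy b μ (fun ω => (V ω, W ω)) := by
  set Z : Ω → A × C × D := fun ω => (U ω, V ω, W ω) with hZdef
  set UW : Ω → A × D := fun ω => (U ω, W ω) with hUWdef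
  set VW : Ω → C × D := fun ω => (V ω, W ω) with hVWdef
  set q : A × C × D → ℝ :=
    fun z => pr μ UW (z.1, z.2.2) * (pr μ VW (z.2.1, z.2.2) / pr μ W z.2.2) with hqdef
  -- q = 0 forces p = 0
  have hzz : ∀ z, q z = 0 → pr μ Z z = 0 := by
    intro z h
    refine le_antisymm ?_ (pr_nonneg μ Z z)
    rcases mul_eq_zero.mp h with h | h
    · calc pr μ Z z ≤ pr μ UW (z.1, z.2.2) := pr_le_pr μ _ _ (fun ω hx => by rw [← hx])
        _ = 0 := h
    · rcases div_eq_zero_iff.mp h with h | h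
      · calc pr μ Z z ≤ pr μ VW (z.2.1, z.2.2) := pr_le_pr μ _ _ (fun ω hx => by rw [← hx])
          _ = 0 := h
      · calc pr μ Z z ≤ pr μ W z.2.2 := pr_le_pr μ _ _ (fun ω hx => by rw [← hx])
          _ = 0 := h
  -- sum of q is at most 1
  have hq1 : ∑ z, q z ≤ 1 := by
    have e1 : ∑ z, q z = ∑ d, ∑ a, ∑ c, q (a, c, d) := by
      rw [Fintype.sum_prod_type]
      rw [Finset.sum_congr rfl fun a _ => Fintype.sum_prod_type (f := fun y => q (a, y))]
      rw [Finset.sum_congr rfl fun a (_ : a ∈ univ) =>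
        Finset.sum_comm (f := fun c d => q (a, c, d))]
      exact Finset.sum_comm
    rw [e1]
    have e2 : ∀ d, ∑ a, ∑ c, q (a, c, d) = pr μ W d * (pr μ W d / pr μ W d) := by
      intro d
      have inner : ∀ a, ∑ c, q (a, c, d)
          = pr μ UW (a, d) * ((∑ c, pr μ VW (c, d)) / pr μ W d) := by
        intro a
        simp only [hqdef]
        rw [← Finset.mul_sum, ← Finset.sum_div]
      rw [Finset.sum_congr rfl fun a _ => inner a, ← Finset.sum_mul,
        sum_pr_fst μ U W d, sum_pr_fst μ V W d]
    rw [Finset.sum_congr rfl fun d _ => e2 d]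
    calc ∑ d, pr μ W d * (pr μ W d / pr μ W d) ≤ ∑ d, pr μ W d := by
          refine Finset.sum_le_sum fun d _ => ?_
          rcases eq_or_ne (pr μ W d) 0 with h | h
          · rw [h]; simp
          · rw [div_self h, mul_one]
      _ = 1 := sum_pr μ W
  have hG := gibbs hb (pr μ Z) q (pr_nonneg μ Z)
    (fun z => mul_nonneg (pr_nonneg μ _ _)
      (div_nonneg (pr_nonneg μ _ _) (pr_nonneg μ _ _)))
    (sum_pr μ Z) hq1 hzz
  rw [← entropy_pr] at hG
  -- split the logarithm
  have split : ∀ z, pr μ Z z * Real.logb b (q z)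
      = pr μ Z z * Real.logb b (pr μ UW (z.1, z.2.2))
        + pr μ Z z * Real.logb b (pr μ VW (z.2.1, z.2.2))
        - pr μ Z z * Real.logb b (pr μ W z.2.2) := by
    intro z
    rcases eq_or_lt_of_le (pr_nonneg μ Z z) with h0 | h0
    · rw [← h0]; ring
    · have h1 : pr μ UW (z.1, z.2.2) ≠ 0 := by
        intro h
        have := hzz z (by rw [hqdef]; simp only [h, zero_mul]); linarith
      have h3 : pr μ W z.2.2 ≠ 0 := by
        intro h
        have hp : pr μ Z z ≤ pr μ W z.2.2 := pr_le_pr μ _ _ (fun ω hx => by rw [← hx])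
        rw [h] at hp; linarith
      have h2 : pr μ VW (z.2.1, z.2.2) ≠ 0 := by
        intro h
        have := hzz z (by rw [hqdef]; simp only [h, zero_div, mul_zero]); linarith
      rw [hqdef]
      simp only
      rw [Real.logb_mul h1 (div_ne_zero h2 h3), Real.logb_div h2 h3]
      ring
  have hsplit : -∑ z, pr μ Z z * Real.logb b (q z)
      = entropy b μ UW + entropy b μ VW - entropy b μ W := by
    rw [Finset.sum_congr rfl fun z _ => split z]
    rw [Finset.sum_sub_distrib, Finset.sum_add_distrib]
    have m1 : ∑ z, pr μ Z z * Real.logb b (pr μ UW (z.1, z.2.2))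
        = ∑ w, pr μ UW w * Real.logb b (pr μ UW w) := by
      have h1 : ∀ w, pr μ (fun ω => ((Z ω).1, (Z ω).2.2)) w = pr μ UW w := fun w => rfl
      have := sum_pr_mul μ Z (fun z => (z.1, z.2.2)) (fun w => Real.logb b (pr μ UW w))
      simp only [h1] at this
      rw [← this]
    have m2 : ∑ z, pr μ Z z * Real.logb b (pr μ VW (z.2.1, z.2.2))
        = ∑ w, pr μ VW w * Real.logb b (pr μ VW w) := by
      have h1 : ∀ w, pr μ (fun ω => ((Z ω).2.1, (Z ω).2.2)) w = pr μ VW w := fun w => rfl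
      have := sum_pr_mul μ Z (fun z => (z.2.1, z.2.2)) (fun w => Real.logb b (pr μ VW w))
      simp only [h1] at this
      rw [← this]
    have m3 : ∑ z, pr μ Z z * Real.logb b (pr μ W z.2.2)
        = ∑ w, pr μ W w * Real.logb b (pr μ W w) := by
      have h1 : ∀ w, pr μ (fun ω => (Z ω).2.2) w = pr μ W w := fun w => rfl
      have := sum_pr_mul μ Z (fun z => z.2.2) (fun w => Real.logb b (pr μ W w))
      simp only [h1] at this
      rw [← this]
    rw [m1, m2, m3, entropy_pr, entropy_pr, entropy_pr]
    ring
  rw [hsplit] at hG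
  linarith


/-- `H(Y) ≤ H(X, Y)`. -/
lemma entropy_snd_le {A C : Type*} [Fintype A] [Fintype C] (hb : 1 < b) (μ : FinPMF Ω)
    (X : Ω → A) (Y : Ω → C) :
    entropy b μ Y ≤ entropy b μ (fun ω => (X ω, Y ω)) :=
  entropy_comp_le hb μ (fun ω => (X ω, Y ω)) Prod.snd

set_option maxHeartbeats 1000000 in
lemma cond_mono {A C D : Type*} [Fintype A] [Fintype C] [Fintype D] (hb : 1 < b)
    (μ : FinPMF Ω) (S : Ω → A) (Z : Ω → C) (g : C → D) :
    entropy b μ (fun ω => (S ω, Z ω)) - entropy b μ Z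
      ≤ entropy b μ (fun ω => (S ω, g (Z ω))) - entropy b μ (fun ω => g (Z ω)) := by
  have h1 : entropy b μ (fun ω => (S ω, Z ω, g (Z ω))) = entropy b μ (fun ω => (S ω, Z ω)) := by
    have hf : Function.Injective (fun y : A × C => (y.1, y.2, g y.2)) := by
      intro y₁ y₂ h
      simp only [Prod.mk.injEq] at h
      exact Prod.ext h.1 h.2.1
    exact entropy_comp_inj μ (fun ω => (S ω, Z ω)) hf
  have h2 : entropy b μ (fun ω => (Z ω, g (Z ω))) = entropy b μ Z := by
    have hf : Function.Injective (fun c : C => (c, g c)) := by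
      intro c₁ c₂ h
      simpa using congrArg Prod.fst h
    exact entropy_comp_inj μ Z hf
  have h3 := entropy_submod hb μ S Z (fun ω => g (Z ω))
  linarith

/-- Subadditivity for a tuple indexed by (the subtype of) a finset. -/
lemma entropy_pi_le {ι : Type*} [DecidableEq ι] (hb : 1 < b) (μ : FinPMF Ω)
    (C : ι → Type*) [∀ i, Fintype (C i)] (V : ∀ i, Ω → C i) (s : Finset ι) :
    entropy b μ (fun ω => fun j : {i // i ∈ s} => V j.1 ω)
      ≤ ∑ i ∈ s, entropy b μ (V i) := by
  classical
  induction s using Finset.induction_on with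
  | empty =>
    haveI : IsEmpty {i // i ∈ (∅ : Finset ι)} :=
      ⟨fun j => (Finset.notMem_empty j.1 j.2)⟩
    haveI := Pi.uniqueOfIsEmpty (fun j : {i // i ∈ (∅ : Finset ι)} => C j.1)
    rw [entropy_unique μ _, Finset.sum_empty]
  | @insert a s ha ih =>
    have hf : Function.Injective
        (fun h : (∀ j : {i // i ∈ insert a s}, C j.1) =>
          (h ⟨a, Finset.mem_insert_self a s⟩,
            fun j : {i // i ∈ s} => h ⟨j.1, Finset.mem_insert_of_mem j.2⟩)) := by
      intro h₁ h₂ he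
      simp only [Prod.mk.injEq] at he
      funext j
      rcases Finset.mem_insert.mp j.2 with hj | hj
      · have : j = ⟨a, Finset.mem_insert_self a s⟩ := Subtype.ext hj
        rw [this]; exact he.1
      · have : j = ⟨j.1, Finset.mem_insert_of_mem hj⟩ := Subtype.ext rfl
        rw [this]
        exact congrFun he.2 ⟨j.1, hj⟩
    have heq := entropy_comp_inj (b := b) μ
      (fun ω => fun j : {i // i ∈ insert a s} => V j.1 ω) hf
    have hpair := entropy_pair_le hb μ (V a)
      (fun ω => fun j : {i // i ∈ s} => V j.1 ω)
    rw [heq] at hpair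
    rw [Finset.sum_insert ha]
    exact hpair.trans (by linarith)

/-- Subadditivity for a tuple indexed by a fintype. -/
lemma entropy_pi_le' {ι : Type*} [Fintype ι] [DecidableEq ι] (hb : 1 < b) (μ : FinPMF Ω)
    (C : ι → Type*) [∀ i, Fintype (C i)] (V : ∀ i, Ω → C i) :
    entropy b μ (fun ω => fun i => V i ω) ≤ ∑ i, entropy b μ (V i) := by
  have hf : Function.Injective
      (fun h : (∀ i, C i) => fun j : {i // i ∈ (univ : Finset ι)} => h j.1) := by
    intro h₁ h₂ he
    funext i
    exact congrFun he ⟨i, Finset.mem_univ i⟩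
  have heq := entropy_comp_inj (b := b) μ (fun ω => fun i => V i ω) hf
  rw [← heq]
  exact entropy_pi_le hb μ C V univ


lemma averaging {n : ℕ} (I : Finset (Fin n)) (t ℓ : ℕ) (φ : Fin n → ℝ)
    (ht : t < I.card)
    (key : ∀ T ∈ Finset.powersetCard t I, (ℓ : ℝ) ≤ ∑ i ∈ I \ T, φ i) :
    (ℓ : ℝ) * I.card / (I.card - t) ≤ ∑ i ∈ I, φ i := by
  classical
  set m := I.card with hm
  have hm1 : 1 ≤ m := lt_of_le_of_lt (Nat.zero_le t) ht
  -- sum the key inequality over all T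
  have S1 : (m.choose t : ℝ) * ℓ ≤
      ∑ T ∈ Finset.powersetCard t I, ∑ i ∈ I \ T, φ i := by
    calc (m.choose t : ℝ) * ℓ
        = ∑ _T ∈ Finset.powersetCard t I, (ℓ : ℝ) := by
          rw [Finset.sum_const, Finset.card_powersetCard, nsmul_eq_mul, hm]
      _ ≤ _ := Finset.sum_le_sum key
  -- exchange the two sums
  have S2 : ∑ T ∈ Finset.powersetCard t I, ∑ i ∈ I \ T, φ i
      = ((m - 1).choose t : ℝ) * ∑ i ∈ I, φ i := by
    have e1 : ∀ T ∈ Finset.powersetCard t I,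
        ∑ i ∈ I \ T, φ i = ∑ i ∈ I, if i ∉ T then φ i else 0 := by
      intro T _
      rw [Finset.sdiff_eq_filter, Finset.sum_filter]
    rw [Finset.sum_congr rfl e1, Finset.sum_comm]
    rw [Finset.mul_sum]
    refine Finset.sum_congr rfl fun i hi => ?_
    have e2 : ∑ T ∈ Finset.powersetCard t I, (if i ∉ T then φ i else 0)
        = ((Finset.powersetCard t I).filter (fun T => i ∉ T)).card • φ i := by
      rw [← Finset.sum_filter, Finset.sum_const]
    have e3 : (Finset.powersetCard t I).filter (fun T => i ∉ T)
        = Finset.powersetCard t (I.erase i) := by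
      ext T
      simp only [Finset.mem_filter, Finset.mem_powersetCard, Finset.subset_erase]
      tauto
    rw [e2, e3, Finset.card_powersetCard, Finset.card_erase_of_mem hi, nsmul_eq_mul, hm]
  rw [S2] at S1
  -- the binomial identity
  have hid : (m - t) * m.choose t = m * (m - 1).choose t := by
    have h1 : m.choose (t + 1) * (t + 1) = m.choose t * (m - t) :=
      Nat.choose_succ_right_eq m t
    have h2 : m * (m - 1).choose t = m.choose (t + 1) * (t + 1) := by
      have h := Nat.add_one_mul_choose_eq (m - 1) t
      simp only [Nat.succ_eq_add_one, Nat.sub_add_cancel hm1] at h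
      exact h
    calc (m - t) * m.choose t = m.choose t * (m - t) := Nat.mul_comm _ _
      _ = m.choose (t + 1) * (t + 1) := h1.symm
      _ = m * (m - 1).choose t := h2.symm
  have hmt : (0 : ℝ) < (m : ℝ) - t := by
    have : (t : ℝ) < m := by exact_mod_cast ht
    linarith
  rw [div_le_iff₀ hmt]
  have hpos : (0 : ℝ) < ((m - 1).choose t : ℝ) := by
    have : 0 < (m - 1).choose t := Nat.choose_pos (by omega)
    exact_mod_cast this
  -- multiply S1 by (m - t)
  have S3 : ((m : ℝ) - t) * ((m.choose t : ℝ) * ℓ)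
      ≤ ((m : ℝ) - t) * (((m - 1).choose t : ℝ) * ∑ i ∈ I, φ i) :=
    mul_le_mul_of_nonneg_left S1 hmt.le
  have hcast : ((m : ℝ) - t) * (m.choose t : ℝ) = (m : ℝ) * ((m - 1).choose t : ℝ) := by
    have : ((m - t : ℕ) : ℝ) * ((m.choose t : ℕ) : ℝ)
        = ((m : ℕ) : ℝ) * (((m - 1).choose t : ℕ) : ℝ) := by
      rw [← Nat.cast_mul, ← Nat.cast_mul, hid]
    rwa [Nat.cast_sub ht.le] at this
  nlinarith [S3, hcast, hpos]


lemma entropy_uniform {A : Type*} [Fintype A] (hb : 1 < b) (ℓ : ℕ)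
    (μ : FinPMF Ω) (S : Ω → Fin ℓ → A)
    (hcardA : (Fintype.card A : ℝ) = b)
    (hunif : ∀ s : Fin ℓ → A, prob μ {ω | S ω = s} = (Fintype.card (Fin ℓ → A) : ℝ)⁻¹) :
    entropy b μ S = ℓ := by
  have hNnat : Fintype.card (Fin ℓ → A) = Fintype.card A ^ ℓ := by
    rw [Fintype.card_fun, Fintype.card_fin]
  have hNpos : (0 : ℝ) < (Fintype.card (Fin ℓ → A) : ℝ) := by
    have : 0 < Fintype.card A := by
      have : (0:ℝ) < (Fintype.card A : ℝ) := by linarith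
      exact_mod_cast this
    rw [hNnat]
    positivity
  unfold entropy
  rw [Finset.sum_congr rfl (fun a (_ : a ∈ univ) => by rw [hunif a])]
  rw [Finset.sum_const, Finset.card_univ, nsmul_eq_mul]
  rw [Real.logb_inv]
  have e1 : -((Fintype.card (Fin ℓ → A) : ℝ) * ((Fintype.card (Fin ℓ → A) : ℝ)⁻¹ *
      -Real.logb b (Fintype.card (Fin ℓ → A) : ℝ)))
      = Real.logb b (Fintype.card (Fin ℓ → A) : ℝ) := by
    have hcpos : (0:ℝ) < (Fintype.card A : ℝ) := by rw [hcardA]; linarith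
    field_simp
  rw [e1]
  have e2 : ((Fintype.card (Fin ℓ → A) : ℝ)) = b ^ ℓ := by
    rw [hNnat]; push_cast [hcardA]; ring
  rw [e2, Real.logb_pow, Real.logb_self_eq_one hb, mul_one]

end SSS

open SSS

set_option maxHeartbeats 2000000

/-- In an `(n, ℓ, r, t)` secret sharing scheme with uniform secret,
for any `I` with `#I ≥ r` and preprocessing functions `E_{I,i}` from which the secret is
recoverable, the decoding bandwidth satisfies
`Σ_{i∈I} H(E(x_i)) ≥ ℓ·#I / (#I − t)` (entropies with base `#𝒜`). -/
theorem decoding_bandwidth_lower_bound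
    {Ω A : Type*} [Fintype Ω] [Fintype A] (hA : 2 ≤ Fintype.card A)
    (n ℓ r t : ℕ) (hℓ : 1 ≤ ℓ) (hr : r ≤ n)
    (μ : FinPMF Ω) (S : Ω → Fin ℓ → A) (X : Ω → Fin n → A)
    (hunif : ∀ s : Fin ℓ → A, prob μ {ω | S ω = s} = (Fintype.card (Fin ℓ → A) : ℝ)⁻¹)
    (hrec : ∀ J : Finset (Fin n), r ≤ J.card →
      condEntropy (Fintype.card A) μ S (fun ω (j : { i // i ∈ J }) => X ω j.1) = 0)
    (hpriv : ∀ J : Finset (Fin n), J.card ≤ t →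
      condEntropy (Fintype.card A) μ S (fun ω (j : { i // i ∈ J }) => X ω j.1)
        = entropy (Fintype.card A) μ S)
    (I : Finset (Fin n)) (hI : r ≤ I.card) (htI : t < I.card)
    (B : { i // i ∈ I } → Type*) [∀ i, Fintype (B i)]
    (E : ∀ i : { i // i ∈ I }, A → B i)
    (hdec : condEntropy (Fintype.card A) μ S
      (fun ω (i : { i // i ∈ I }) => E i (X ω i.1)) = 0) :
    (ℓ * I.card : ℝ) / (I.card - t)
      ≤ ∑ i : { i // i ∈ I }, entropy (Fintype.card A) μ (fun ω => E i (X ω i.1)) := by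
  
  classical
  have hb : (1 : ℝ) < (Fintype.card A : ℝ) := by exact_mod_cast hA
  set φ : Fin n → ℝ := fun i => if h : i ∈ I then
      entropy (Fintype.card A : ℝ) μ (fun ω => E ⟨i, h⟩ (X ω i)) else 0 with hφ
  have hsum : ∑ i : { i // i ∈ I }, entropy (Fintype.card A : ℝ) μ (fun ω => E i (X ω i.1))
      = ∑ i ∈ I, φ i := by
    rw [← Finset.sum_coe_sort I φ]
    refine Fintype.sum_congr _ _ fun j => ?_
    simp only [hφ]
    rw [dif_pos j.2]
  have hS : entropy (Fintype.card A : ℝ) μ S = ℓ := entropy_uniform hb ℓ μ S rfl hunif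
  have key : ∀ T ∈ Finset.powersetCard t I, (ℓ : ℝ) ≤ ∑ i ∈ I \ T, φ i := by
    intro T hT
    obtain ⟨hTI, hTc⟩ := Finset.mem_powersetCard.mp hT
    have hDm : ∀ {j : Fin n}, j ∈ I \ T → j ∈ I := fun {j} h => (Finset.mem_sdiff.mp h).1
    -- privacy at T
    have hpT : entropy (Fintype.card A : ℝ) μ
          (fun ω => (S ω, fun j : { i // i ∈ T } => X ω j.1))
        - entropy (Fintype.card A : ℝ) μ (fun ω (j : { i // i ∈ T }) => X ω j.1)
        = entropy (Fintype.card A : ℝ) μ S := hpriv T (le_of_eq hTc)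
    -- the combined data (preprocessed shares outside T, raw shares inside T)
    set Z : Ω → (∀ j : { i // i ∈ I \ T }, B ⟨j.1, hDm j.2⟩) × ({ i // i ∈ T } → A) :=
      fun ω => (fun j => E ⟨j.1, hDm j.2⟩ (X ω j.1), fun j => X ω j.1) with hZ
    set g : (∀ j : { i // i ∈ I \ T }, B ⟨j.1, hDm j.2⟩) × ({ i // i ∈ T } → A)
        → (∀ i : { i // i ∈ I }, B i) :=
      fun z i => if h : i.1 ∈ T then E i (z.2 ⟨i.1, h⟩)
        else z.1 ⟨i.1, Finset.mem_sdiff.mpr ⟨i.2, h⟩⟩ with hg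
    have hrecon : ∀ ω, g (Z ω) = fun i : { i // i ∈ I } => E i (X ω i.1) := by
      intro ω
      funext i
      by_cases hi : i.1 ∈ T
      · simp only [hg, hZ, dif_pos hi]
      · simp only [hg, hZ, dif_neg hi]
    have e1 : entropy (Fintype.card A : ℝ) μ
          (fun ω => (S ω, fun j : { i // i ∈ T } => X ω j.1))
        ≤ entropy (Fintype.card A : ℝ) μ (fun ω => (S ω, Z ω)) :=
      entropy_comp_le hb μ (fun ω => (S ω, Z ω)) (fun z => (z.1, z.2.2))
    have h2 := cond_mono hb μ S Z g
    simp only [hrecon] at h2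
    have hdec' : entropy (Fintype.card A : ℝ) μ
          (fun ω => (S ω, fun i : { i // i ∈ I } => E i (X ω i.1)))
        - entropy (Fintype.card A : ℝ) μ (fun ω (i : { i // i ∈ I }) => E i (X ω i.1))
        = 0 := hdec
    have e3 : entropy (Fintype.card A : ℝ) μ Z
        ≤ entropy (Fintype.card A : ℝ) μ
            (fun ω (j : { i // i ∈ I \ T }) => E ⟨j.1, hDm j.2⟩ (X ω j.1))
          + entropy (Fintype.card A : ℝ) μ (fun ω (j : { i // i ∈ T }) => X ω j.1) :=
      entropy_pair_le hb μ
        (fun ω (j : { i // i ∈ I \ T }) => E ⟨j.1, hDm j.2⟩ (X ω j.1))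
        (fun ω (j : { i // i ∈ T }) => X ω j.1)
    have e4 : entropy (Fintype.card A : ℝ) μ
          (fun ω (j : { i // i ∈ I \ T }) => E ⟨j.1, hDm j.2⟩ (X ω j.1))
        ≤ ∑ j : { i // i ∈ I \ T },
            entropy (Fintype.card A : ℝ) μ (fun ω => E ⟨j.1, hDm j.2⟩ (X ω j.1)) :=
      entropy_pi_le' hb μ (fun j : { i // i ∈ I \ T } => B ⟨j.1, hDm j.2⟩)
        (fun j ω => E ⟨j.1, hDm j.2⟩ (X ω j.1))
    have e5 : ∑ j : { i // i ∈ I \ T },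
          entropy (Fintype.card A : ℝ) μ (fun ω => E ⟨j.1, hDm j.2⟩ (X ω j.1))
        = ∑ i ∈ I \ T, φ i := by
      rw [← Finset.sum_coe_sort (I \ T) φ]
      refine Fintype.sum_congr _ _ fun j => ?_
      simp only [hφ]
      rw [dif_pos (hDm j.2)]
    linarith
  have := averaging I t ℓ φ htI key
  rw [hsum]
  linarith
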